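/- arXiv:2007.10449 — 3 statements merged into one kernel-verified Lean document; each statement's English description precedes it below -/
import Mathlib

section
/- Suppose f, g : X → ℝ and c : X × X → ℝ satisfy: for every x in the support of α, ∫ exp((f(x) + g(y) - c(x,y))/γ) dβ(y) = 1, and c is G_c-Lipschitz in its first argument, i.e. |c(x,y) - c(x',y)| ≤ G_c‖x - x'‖ for all x, x', y. Then f is G_c-Lipschitz: |f(x) - f(x')| ≤ G_c‖x - x'‖ for all x, x' in supp(α). -/
open MeasureTheory Real

/-- The support of a measure: points all of whose neighborhoods have positive measure. -/
def measSupport {E : Type*} [TopologicalSpace E] [MeasurableSpace E]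
    (μ : Measure E) : Set E := {x | ∀ U ∈ nhds x, 0 < μ U}

/-- Pointwise `exp ((a - a' - L) / γ) * exp ((a' + g - k') / γ) ≤ exp ((a + g - k) / γ)`;
integrating against the two normalisations gives `exp ((a - a' - L) / γ) ≤ 1`. -/
theorem sub_le_of_integral_exp_eq_one {Y : Type*} [MeasurableSpace Y] {μ : Measure Y}
    {γ L a a' : ℝ} {g k k' : Y → ℝ} (hγ : 0 < γ)
    (h : ∫ y, exp ((a + g y - k y) / γ) ∂μ = 1)
    (h' : ∫ y, exp ((a' + g y - k' y) / γ) ∂μ = 1)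
    (hk : ∀ y, k y - k' y ≤ L) : a - a' ≤ L := by
  have hint : Integrable (fun y => exp ((a + g y - k y) / γ)) μ :=
    Integrable.of_integral_ne_zero (by rw [h]; exact one_ne_zero)
  have hpt : ∀ y, exp ((a - a' - L) / γ) * exp ((a' + g y - k' y) / γ)
      ≤ exp ((a + g y - k y) / γ) := fun y => by
    rw [← exp_add, ← add_div]
    gcongr
    linarith [hk y]
  have hmono := integral_mono_of_nonneg (.of_forall fun y => by positivity) hint (.of_forall hpt)
  rw [integral_const_mul, h, h', mul_one, exp_le_one_iff, div_le_iff₀ hγ, zero_mul] at hmono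
  linarith

theorem sinkhorn_potential_lipschitz_general {d : ℕ}
    (γ Gc : ℝ) (hγ : 0 < γ)
    (α β : Measure (EuclideanSpace ℝ (Fin d)))
    (c : EuclideanSpace ℝ (Fin d) → EuclideanSpace ℝ (Fin d) → ℝ)
    (f g : EuclideanSpace ℝ (Fin d) → ℝ)
    (hopt : ∀ x ∈ measSupport α,
      ∫ y, Real.exp ((f x + g y - c x y) / γ) ∂β = 1)
    (hc : ∀ x x' y : EuclideanSpace ℝ (Fin d), |c x y - c x' y| ≤ Gc * ‖x - x'‖) :
    ∀ x ∈ measSupport α, ∀ x' ∈ measSupport α, |f x - f x'| ≤ Gc * ‖x - x'‖ := by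
  intro x hx x' hx'
  refine abs_sub_le_iff.2 ⟨?_, ?_⟩
  · exact sub_le_of_integral_exp_eq_one hγ (hopt x hx) (hopt x' hx')
      fun y => (abs_le.1 (hc x x' y)).2
  · rw [norm_sub_rev]
    exact sub_le_of_integral_exp_eq_one hγ (hopt x' hx') (hopt x hx)
      fun y => (abs_le.1 (hc x' x y)).2

/-- If for every `x` in the support of `α` the Sinkhorn optimality condition
`∫ exp((f x + g y - c x y)/γ) dβ(y) = 1` holds, and `c` is `G_c`-Lipschitz in its
first argument, then `f` is `G_c`-Lipschitz on `supp α`. -/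
theorem sinkhorn_potential_lipschitz {d : ℕ}
    (X : Set (EuclideanSpace ℝ (Fin d))) (hXcompact : IsCompact X)
    (γ Gc : ℝ) (hγ : 0 < γ)
    (α β : Measure (EuclideanSpace ℝ (Fin d)))
    [IsProbabilityMeasure α] [IsProbabilityMeasure β]
    (c : EuclideanSpace ℝ (Fin d) → EuclideanSpace ℝ (Fin d) → ℝ)
    (f g : EuclideanSpace ℝ (Fin d) → ℝ)
    (hopt : ∀ x ∈ measSupport α,
      ∫ y, Real.exp ((f x + g y - c x y) / γ) ∂β = 1)
    (hc : ∀ x x' y : EuclideanSpace ℝ (Fin d), |c x y - c x' y| ≤ Gc * ‖x - x'‖) :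
    ∀ x ∈ measSupport α, ∀ x' ∈ measSupport α, |f x - f x'| ≤ Gc * ‖x - x'‖ :=
  sinkhorn_potential_lipschitz_general γ Gc hγ α β c f g hopt hc
end

section
/- Let h(x,y) = exp((f(x) + g(y) - c(x,y))/γ) where (f,g) are Sinkhorn potentials satisfying ∫ h(x,y) dβ(y) = 1 for all relevant x. If ‖∇₁c(x,y)‖ ≤ G_c and ∇₁c is L_c-Lipschitz in x, then ∇f exists and is Lipschitz with constant L_f = 4G_c²/γ + L_c: ‖∇f(x) - ∇f(x')‖ ≤ (4G_c²/γ + L_c)‖x - x'‖. -/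
/-!
The marginal condition `∫ h x y dβ(y) = 1` says `exp (-f x / γ) = ∫ exp ((g y - c x y) / γ) dβ(y)`,
so `f` is a soft-min of `c x ·` over `β`. Differentiating under the integral sign (dominated on a
ball thanks to the `G_c`-Lipschitz continuity of `c` in `x`) gives `∇f x = ∫ h x y • ∇₁c x y dβ(y)`,
hence `‖∇f‖ ≤ G_c` and `f` is `G_c`-Lipschitz too. Then `∇f x - ∇f x'` splits as
`∫ h x y • (∇₁c x y - ∇₁c x' y)`, of norm at most `L_c ‖x - x'‖`, plus
`∫ (h x y - h x' y) • ∇₁c x' y`; since `|eᵃ - eᵇ| ≤ |a - b| (eᵃ + eᵇ)` and the exponents of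
`h x y` and `h x' y` differ by at most `2 G_c ‖x - x'‖ / γ`, the second term is at most
`G_c · (2 G_c ‖x - x'‖ / γ) · 2`.
-/

open MeasureTheory Real Filter Topology InnerProductSpace

theorem Real.abs_exp_sub_exp_le (a b : ℝ) :
    |exp a - exp b| ≤ |a - b| * (exp a + exp b) := by
  have tangent : ∀ s t : ℝ, exp s - exp t ≤ (s - t) * exp s := fun s t => by
    have := mul_le_mul_of_nonneg_left (add_one_le_exp (t - s)) (exp_pos s).le
    rw [← exp_add, add_sub_cancel] at this
    linarith
  rw [abs_sub_le_iff]
  constructor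
  · nlinarith [tangent a b, le_abs_self (a - b), exp_pos a, exp_pos b, abs_nonneg (a - b)]
  · nlinarith [tangent b a, neg_abs_le (a - b), exp_pos a, exp_pos b, abs_nonneg (a - b)]

section Gradient

variable {E : Type*} [NormedAddCommGroup E] [InnerProductSpace ℝ E]

theorem abs_sub_le_of_hasGradientAt [CompleteSpace E] {F : E → ℝ} {F' : E → E} {C : ℝ}
    (hF : ∀ x, HasGradientAt F (F' x) x) (hC : ∀ x, ‖F' x‖ ≤ C) (x y : E) :
    |F x - F y| ≤ C * ‖x - y‖ := by
  simpa [Real.norm_eq_abs] using Convex.norm_image_sub_le_of_norm_hasFDerivWithin_le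
    (fun z _ => (hF z).hasFDerivAt.hasFDerivWithinAt)
    (fun z _ => (toDual ℝ E).norm_map (F' z) ▸ hC z)
    convex_univ (Set.mem_univ y) (Set.mem_univ x)

variable [FiniteDimensional ℝ E] {α : Type*} [MeasurableSpace α] {μ : Measure α}

theorem aestronglyMeasurable_of_hasGradientAt {u : E → α → ℝ} {Du : α → E} {x : E}
    (hmeas : ∀ z, AEMeasurable (u z) μ) (hu : ∀ y, HasGradientAt (u · y) (Du y) x) :
    AEStronglyMeasurable Du μ := by
  have hinner : ∀ v : E, AEMeasurable (fun y => ⟪v, Du y⟫_ℝ) μ := fun v =>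
    aemeasurable_of_tendsto_metrizable_ae (𝓝[≠] (0 : ℝ))
      (f := fun t y => t⁻¹ • (u (x + t • v) y - u x y))
      (fun t => ((hmeas _).sub (hmeas _)).const_smul _)
      (ae_of_all _ fun y => by
        simpa [real_inner_comm] using
          hasDerivAt_iff_tendsto_slope_zero.1 ((hu y).hasFDerivAt.hasLineDerivAt v))
  let b := stdOrthonormalBasis ℝ E
  have hrepr : Du = fun y => ∑ i, ⟪b i, Du y⟫_ℝ • b i := funext fun y => (b.sum_repr' (Du y)).symm
  rw [hrepr]
  exact Finset.aestronglyMeasurable_fun_sum _ fun i _ =>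
    (hinner (b i)).aestronglyMeasurable.smul_const _

theorem hasGradientAt_integral_exp_neg {u : E → α → ℝ} {Du : E → α → E} {G : ℝ} {x₀ : E}
    (hu : ∀ x y, HasGradientAt (u · y) (Du x y) x) (hDu : ∀ x y, ‖Du x y‖ ≤ G)
    (hmeas : ∀ x, AEMeasurable (u x) μ) (hint : Integrable (fun y => exp (-u x₀ y)) μ) :
    HasGradientAt (fun x => ∫ y, exp (-u x y) ∂μ) (-∫ y, exp (-u x₀ y) • Du x₀ y ∂μ) x₀ := by
  have hderiv : ∀ x y, HasFDerivAt (fun z => exp (-u z y))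
      (toDual ℝ E (-(exp (-u x y) • Du x y))) x := fun x y => by
    refine (hu x y).hasFDerivAt.neg.exp.congr_fderiv ?_
    rw [map_neg, LinearIsometryEquiv.map_smulₛₗ]
    simp
  have hdom : ∀ y, ∀ x ∈ Metric.ball x₀ 1,
      ‖toDual ℝ E (-(exp (-u x y) • Du x y))‖ ≤ G * exp G * exp (-u x₀ y) := by
    intro y x hx
    have hG : 0 ≤ G := (norm_nonneg _).trans (hDu x₀ y)
    have hlip := abs_sub_le_of_hasGradientAt (hu · y) (hDu · y) x₀ x
    have hexp : exp (-u x y) ≤ exp G * exp (-u x₀ y) := by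
      rw [← exp_add]
      gcongr
      rw [mem_ball_iff_norm'] at hx
      nlinarith [le_abs_self (u x₀ y - u x y)]
    rw [LinearIsometryEquiv.norm_map, norm_neg, norm_smul, norm_of_nonneg (exp_pos _).le]
    calc exp (-u x y) * ‖Du x y‖ ≤ (exp G * exp (-u x₀ y)) * G :=
          mul_le_mul hexp (hDu x y) (norm_nonneg _) (by positivity)
      _ = G * exp G * exp (-u x₀ y) := by ring
  have h := hasFDerivAt_integral_of_dominated_of_fderiv_le (Metric.ball_mem_nhds x₀ one_pos)
    (Eventually.of_forall fun x => (hmeas x).neg.exp.aestronglyMeasurable) hint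
    ((toDual ℝ E).continuous.comp_aestronglyMeasurable
      (hint.aestronglyMeasurable.smul (aestronglyMeasurable_of_hasGradientAt hmeas (hu x₀))).neg)
    (ae_of_all _ hdom) (hint.const_mul _) (ae_of_all _ fun y x _ => hderiv x y)
  have hcomm : ∫ y, toDual ℝ E (-(exp (-u x₀ y) • Du x₀ y)) ∂μ
      = toDual ℝ E (∫ y, -(exp (-u x₀ y) • Du x₀ y) ∂μ) :=
    (toDual ℝ E).toLinearIsometry.integral_comp_comm _
  rwa [hcomm, integral_neg, ← hasGradientAt_iff_hasFDerivAt] at h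

end Gradient

section Kernel

variable {α : Type*} [MeasurableSpace α] {μ : Measure α} {E : Type*} [NormedAddCommGroup E]
  [NormedSpace ℝ E]

theorem norm_integral_smul_le_of_integral_eq_one {p : α → ℝ} {V : α → E} {A : ℝ}
    (hp : Integrable p μ) (hp0 : ∀ y, 0 ≤ p y) (hp1 : ∫ y, p y ∂μ = 1) (hV : ∀ y, ‖V y‖ ≤ A) :
    ‖∫ y, p y • V y ∂μ‖ ≤ A :=
  calc ‖∫ y, p y • V y ∂μ‖ ≤ ∫ y, A * p y ∂μ :=
        norm_integral_le_of_norm_le (hp.const_mul A) (ae_of_all _ fun y => by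
          rw [norm_smul, norm_of_nonneg (hp0 y), mul_comm]
          exact mul_le_mul_of_nonneg_right (hV y) (hp0 y))
    _ = A := by rw [integral_const_mul, hp1, mul_one]

theorem norm_integral_smul_sub_integral_smul_le {p q : α → ℝ} {V W : α → E} {A B ε : ℝ}
    (hp : Integrable p μ) (hq : Integrable q μ) (hp0 : ∀ y, 0 ≤ p y)
    (hp1 : ∫ y, p y ∂μ = 1) (hq1 : ∫ y, q y ∂μ = 1)
    (hVm : AEStronglyMeasurable V μ) (hWm : AEStronglyMeasurable W μ)
    (hVW : ∀ y, ‖V y - W y‖ ≤ A) (hW : ∀ y, ‖W y‖ ≤ B)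
    (hpq : ∀ y, |p y - q y| ≤ ε * (p y + q y)) :
    ‖∫ y, p y • V y ∂μ - ∫ y, q y • W y ∂μ‖ ≤ A + 2 * ε * B := by
  have hpV : Integrable (fun y => p y • V y) μ := hp.smul_bdd (B + A) hVm
    (ae_of_all _ fun y => (norm_le_norm_add_norm_sub' _ _).trans (add_le_add (hW y) (hVW y)))
  have hpW : Integrable (fun y => p y • W y) μ := hp.smul_bdd B hWm (ae_of_all _ hW)
  have hqW : Integrable (fun y => q y • W y) μ := hq.smul_bdd B hWm (ae_of_all _ hW)
  have hsplit : ∫ y, p y • V y ∂μ - ∫ y, q y • W y ∂μ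
      = ∫ y, p y • (V y - W y) ∂μ + ∫ y, (p y - q y) • W y ∂μ := by
    simp_rw [smul_sub, sub_smul]
    rw [integral_sub hpV hpW, integral_sub hpW hqW]
    abel
  have hmix : ‖∫ y, (p y - q y) • W y ∂μ‖ ≤ 2 * ε * B :=
    calc ‖∫ y, (p y - q y) • W y ∂μ‖ ≤ ∫ y, ε * B * (p y + q y) ∂μ :=
          norm_integral_le_of_norm_le ((hp.add hq).const_mul _) (ae_of_all _ fun y => by
            rw [norm_smul, norm_eq_abs]
            calc |p y - q y| * ‖W y‖ ≤ ε * (p y + q y) * ‖W y‖ :=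
                  mul_le_mul_of_nonneg_right (hpq y) (norm_nonneg _)
              _ ≤ ε * (p y + q y) * B :=
                  mul_le_mul_of_nonneg_left (hW y) ((abs_nonneg _).trans (hpq y))
              _ = ε * B * (p y + q y) := by ring)
      _ = 2 * ε * B := by rw [integral_const_mul, integral_add hp hq, hp1, hq1]; ring
  rw [hsplit]
  exact (norm_add_le _ _).trans
    (add_le_add (norm_integral_smul_le_of_integral_eq_one hp hp0 hp1 hVW) hmix)

end Kernel

section Sinkhorn

variable {E Y : Type*} {γ : ℝ} {c : E → Y → ℝ} {f : E → ℝ} {g : Y → ℝ} {h : E → Y → ℝ}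

theorem abs_sinkhorn_kernel_sub_le (hγ : 0 < γ)
    (hdef : ∀ x y, h x y = exp ((f x + g y - c x y) / γ)) {x x' : E} {y : Y} {δ : ℝ}
    (hf : |f x - f x'| ≤ δ) (hc : |c x y - c x' y| ≤ δ) :
    |h x y - h x' y| ≤ 2 * δ / γ * (h x y + h x' y) := by
  rw [hdef, hdef]
  refine (abs_exp_sub_exp_le _ _).trans (mul_le_mul_of_nonneg_right ?_ (by positivity))
  rw [← sub_div, abs_div, abs_of_pos hγ, div_le_div_iff_of_pos_right hγ,
    show f x + g y - c x y - (f x' + g y - c x' y) = (f x - f x') - (c x y - c x' y) by ring]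
  linarith [abs_sub (f x - f x') (c x y - c x' y)]

variable [MeasurableSpace Y] {β : Measure Y}

-- Nothing is assumed about the measurability of `c` or `g`: it is inherited from that of `h`.
theorem aemeasurable_cost_sub_of_sinkhorn (hγ : γ ≠ 0)
    (hdef : ∀ x y, h x y = exp ((f x + g y - c x y) / γ)) (hint : ∀ x, Integrable (h x) β)
    (x : E) : AEMeasurable (fun y => c x y - g y) β := by
  have hlog : (fun y => c x y - g y) = fun y => f x - γ * log (h x y) := funext fun y => by
    rw [hdef, log_exp]
    field_simp
    ring
  rw [hlog]
  exact ((hint x).aemeasurable.log.const_mul γ).const_sub (f x)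

theorem hasGradientAt_sinkhorn_potential [NormedAddCommGroup E] [InnerProductSpace ℝ E]
    [FiniteDimensional ℝ E] (hγ : γ ≠ 0)
    (hdef : ∀ x y, h x y = exp ((f x + g y - c x y) / γ)) (hopt : ∀ x, ∫ y, h x y ∂β = 1)
    {Dc : E → Y → E} {G : ℝ} (hDc : ∀ x y, HasGradientAt (c · y) (Dc x y) x)
    (hDc_bound : ∀ x y, ‖Dc x y‖ ≤ G) (x : E) : HasGradientAt f (∫ y, h x y • Dc x y ∂β) x := by
  have hint : ∀ x, Integrable (h x) β := fun x => .of_integral_ne_zero (by simp [hopt x])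
  set u : E → Y → ℝ := fun x y => γ⁻¹ * (c x y - g y)
  have hu : ∀ x y, HasGradientAt (u · y) (γ⁻¹ • Dc x y) x := fun x y =>
    hasGradientAt_iff_hasFDerivAt.2 <|
      (((hDc x y).hasFDerivAt.sub_const (g y)).const_mul γ⁻¹).congr_fderiv <| by
        rw [LinearIsometryEquiv.map_smulₛₗ, conj_trivial]
  have hexp : ∀ x y, exp (-u x y) = exp (-f x / γ) * h x y := fun x y => by
    simp only [u, hdef, ← exp_add]
    congr 1
    field_simp
    ring
  have hZ : ∀ x, ∫ y, exp (-u x y) ∂β = exp (-f x / γ) := fun x => by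
    simp_rw [hexp, integral_const_mul, hopt, mul_one]
  have hZgrad := hasGradientAt_integral_exp_neg (x₀ := x) hu
    (fun x y => (norm_smul_le _ _).trans
      (mul_le_mul_of_nonneg_left (hDc_bound x y) (norm_nonneg _)))
    (fun x => (aemeasurable_cost_sub_of_sinkhorn hγ hdef hint x).const_mul _)
    (by simp_rw [hexp]; exact (hint x).const_mul _)
  have hf : f = fun x => -γ * log (∫ y, exp (-u x y) ∂β) := funext fun x => by
    rw [hZ, log_exp]
    field_simp
  have hI : ∫ y, exp (-u x y) • γ⁻¹ • Dc x y ∂β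
      = (γ⁻¹ * exp (-f x / γ)) • ∫ y, h x y • Dc x y ∂β := by
    rw [← integral_smul]
    congr 1
    funext y
    rw [hexp, smul_smul, smul_smul]
    ring_nf
  rw [hasGradientAt_iff_hasFDerivAt] at hZgrad ⊢
  rw [hf]
  refine ((hZgrad.log (by rw [hZ]; positivity)).const_mul (-γ)).congr_fderiv ?_
  rw [hI, hZ, map_neg, LinearIsometryEquiv.map_smulₛₗ, conj_trivial]
  match_scalars
  field_simp

end Sinkhorn

theorem sinkhorn_potential_gradient_lipschitz_general {d : ℕ}
    (γ Gc Lc : ℝ) (hγ : 0 < γ)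
    (β : Measure (EuclideanSpace ℝ (Fin d)))
    (c : EuclideanSpace ℝ (Fin d) → EuclideanSpace ℝ (Fin d) → ℝ)
    (Dc : EuclideanSpace ℝ (Fin d) → EuclideanSpace ℝ (Fin d) → EuclideanSpace ℝ (Fin d))
    (f g : EuclideanSpace ℝ (Fin d) → ℝ)
    (gradf : EuclideanSpace ℝ (Fin d) → EuclideanSpace ℝ (Fin d))
    (h : EuclideanSpace ℝ (Fin d) → EuclideanSpace ℝ (Fin d) → ℝ)
    (hdef : ∀ x y, h x y = Real.exp ((f x + g y - c x y) / γ))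
    (hopt : ∀ x, ∫ y, h x y ∂β = 1)
    (hDc : ∀ x y, HasGradientAt (fun z => c z y) (Dc x y) x)
    (hDc_bound : ∀ x y, ‖Dc x y‖ ≤ Gc)
    (hDc_lip : ∀ x x' y, ‖Dc x y - Dc x' y‖ ≤ Lc * ‖x - x'‖)
    (hgradf : ∀ x, gradf x = ∫ y, h x y • Dc x y ∂β) :
    (∀ x, HasGradientAt f (gradf x) x) ∧
    (∀ x x', ‖gradf x - gradf x'‖ ≤ (4 * Gc ^ 2 / γ + Lc) * ‖x - x'‖) := by
  have hint : ∀ x, Integrable (h x) β := fun x => .of_integral_ne_zero (by simp [hopt x])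
  have hh0 : ∀ x y, 0 ≤ h x y := fun x y => hdef x y ▸ (exp_pos _).le
  have hgrad : ∀ x, HasGradientAt f (gradf x) x := fun x =>
    hgradf x ▸ hasGradientAt_sinkhorn_potential hγ.ne' hdef hopt hDc hDc_bound x
  refine ⟨hgrad, fun x x' => ?_⟩
  have hDc_meas : ∀ x, AEStronglyMeasurable (Dc x) β := fun x =>
    aestronglyMeasurable_of_hasGradientAt (aemeasurable_cost_sub_of_sinkhorn hγ.ne' hdef hint)
      fun y => hasGradientAt_iff_hasFDerivAt.2 ((hDc x y).hasFDerivAt.sub_const (g y))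
  have hf_lip := abs_sub_le_of_hasGradientAt hgrad (fun z => hgradf z ▸
    norm_integral_smul_le_of_integral_eq_one (hint z) (hh0 z) (hopt z) (hDc_bound z)) x x'
  have hkernel : ∀ y, |h x y - h x' y| ≤ 2 * (Gc * ‖x - x'‖) / γ * (h x y + h x' y) := fun y =>
    abs_sinkhorn_kernel_sub_le hγ hdef hf_lip
      (abs_sub_le_of_hasGradientAt (hDc · y) (hDc_bound · y) x x')
  rw [hgradf, hgradf]
  calc _ ≤ Lc * ‖x - x'‖ + 2 * (2 * (Gc * ‖x - x'‖) / γ) * Gc :=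
        norm_integral_smul_sub_integral_smul_le (hint x) (hint x') (hh0 x) (hopt x) (hopt x')
          (hDc_meas x) (hDc_meas x') (hDc_lip x x') (hDc_bound x') hkernel
    _ = (4 * Gc ^ 2 / γ + Lc) * ‖x - x'‖ := by ring

/-- Lipschitz continuity of the gradient of the Sinkhorn potential: with
`h x y = exp((f x + g y - c x y)/γ)` satisfying `∫ h x y dβ(y) = 1`, the gradient
formula `∇f x = ∫ h x y • ∇₁c x y dβ(y)`, a bound `‖∇₁c‖ ≤ G_c` and `L_c`-Lipschitz
continuity of `∇₁c` in `x`, the gradient `∇f` is Lipschitz with constant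
`L_f = 4 G_c² / γ + L_c`. -/
theorem sinkhorn_potential_gradient_lipschitz {d : ℕ}
    (γ Gc Lc : ℝ) (hγ : 0 < γ) (hGc : 0 ≤ Gc)
    (β : Measure (EuclideanSpace ℝ (Fin d))) [IsProbabilityMeasure β]
    (c : EuclideanSpace ℝ (Fin d) → EuclideanSpace ℝ (Fin d) → ℝ)
    (Dc : EuclideanSpace ℝ (Fin d) → EuclideanSpace ℝ (Fin d) → EuclideanSpace ℝ (Fin d))
    (f g : EuclideanSpace ℝ (Fin d) → ℝ)
    (gradf : EuclideanSpace ℝ (Fin d) → EuclideanSpace ℝ (Fin d))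
    (h : EuclideanSpace ℝ (Fin d) → EuclideanSpace ℝ (Fin d) → ℝ)
    (hdef : ∀ x y, h x y = Real.exp ((f x + g y - c x y) / γ))
    (hopt : ∀ x, ∫ y, h x y ∂β = 1)
    (hDc : ∀ x y, HasGradientAt (fun z => c z y) (Dc x y) x)
    (hDc_bound : ∀ x y, ‖Dc x y‖ ≤ Gc)
    (hDc_lip : ∀ x x' y, ‖Dc x y - Dc x' y‖ ≤ Lc * ‖x - x'‖)
    (hgradf : ∀ x, gradf x = ∫ y, h x y • Dc x y ∂β) :
    (∀ x, HasGradientAt f (gradf x) x) ∧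
    (∀ x x', ‖gradf x - gradf x'‖ ≤ (4 * Gc ^ 2 / γ + Lc) * ‖x - x'‖) :=
  sinkhorn_potential_gradient_lipschitz_general γ Gc Lc hγ β c Dc f g gradf h hdef hopt hDc
    hDc_bound hDc_lip hgradf
end

section
/- Let d_H denote the Hilbert projective metric on strictly positive continuous functions on a compact set X, and suppose L is a map satisfying the contraction d_H(Lu, Lv) ≤ λ d_H(u, v) with 0 < λ < 1. If u = A_β v, v = A_α u, u' = A_{β'} v', v' = A_{α'} u', where each A is the composition of an appropriate L with pointwise inversion (which is a d_H-isometry), then d_H(v, v') ≤ (1 - λ²)^{-1} [d_H(A_α u', v') + d_H(A_β v', u')]. -/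
/-- Fixed-point stability for Sinkhorn potentials under the Hilbert projective metric:
if `dH` satisfies the triangle inequality and symmetry, the maps `Aα, Aβ` are
`λ`-contractions (being compositions of Birkhoff–Hopf contractions with the
pointwise-inversion `dH`-isometry), and `u = Aβ v`, `v = Aα u`, `u' = Aβ' v'`,
`v' = Aα' u'`, then `dH v v' ≤ (1-λ²)⁻¹ (dH (Aα u') v' + dH (Aβ v') u')`. -/
theorem sinkhorn_fixed_point_stability {F : Type*}
    (dH : F → F → ℝ)
    (hnonneg : ∀ a b, 0 ≤ dH a b)
    (hsymm : ∀ a b, dH a b = dH b a)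
    (htri : ∀ a b c, dH a c ≤ dH a b + dH b c)
    (lam : ℝ) (hlam0 : 0 < lam) (hlam1 : lam < 1)
    (Aα Aβ Aα' Aβ' : F → F)
    (hAα : ∀ u v, dH (Aα u) (Aα v) ≤ lam * dH u v)
    (hAβ : ∀ u v, dH (Aβ u) (Aβ v) ≤ lam * dH u v)
    (u v u' v' : F)
    (hu : u = Aβ v) (hv : v = Aα u) (hu' : u' = Aβ' v') (hv' : v' = Aα' u') :
    dH v v' ≤ (1 - lam ^ 2)⁻¹ * (dH (Aα u') v' + dH (Aβ v') u') := by
  have h1 : dH v v' ≤ lam * dH u u' + dH (Aα u') v' := by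
    calc dH v v' ≤ dH v (Aα u') + dH (Aα u') v' := htri _ _ _
    _ ≤ lam * dH u u' + dH (Aα u') v' := by
        have := hAα u u'; rw [← hv] at this; linarith
  have h2 : dH u u' ≤ lam * dH v v' + dH (Aβ v') u' := by
    calc dH u u' ≤ dH u (Aβ v') + dH (Aβ v') u' := htri _ _ _
    _ ≤ lam * dH v v' + dH (Aβ v') u' := by
        have := hAβ v v'; rw [← hu] at this; linarith
  have key : (1 - lam ^ 2) * dH v v' ≤ dH (Aα u') v' + dH (Aβ v') u' := by
    have hn := hnonneg (Aβ v') u'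
    nlinarith
  have hpos : 0 < 1 - lam ^ 2 := by nlinarith
  rw [← div_eq_inv_mul, le_div_iff₀ hpos]
  linarith [key]
end
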